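/- arXiv:2009.05544 — 2 statements merged into one kernel-verified Lean document; each statement's English description precedes it below -/
import Mathlib

section
/- Let (Θ, d) be a metric space, let θ₀ ∈ Θ be given, and let (E, E₊) be an ordered Banach space with the positive cone E₊ normal and reproducing. For each θ ∈ Θ \ {θ₀}, let B_θ be a resolvent positive operator on E with s(B_θ) < 0 and let C_θ be a positive bounded linear operator on E. Assume: (i) for every μ > 0 and every θ ∈ Θ \ {θ₀}, B_θ + (1/μ)C_θ is a resolvent positive operator on E; and (ii) for every μ > 0, limsup_{θ → θ₀} s(B_θ + (1/μ)C_θ) < 0. Then lim_{θ → θ₀} r(−(B_θ)⁻¹C_θ) = 0. -/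
open Filter Topology

noncomputable section

variable {E : Type*} [NormedAddCommGroup E] [NormedSpace ℝ E]

/-- A (closed, convex, pointed) positive cone in a Banach space, making it an ordered Banach
space with order `x ≤ y ↔ y - x ∈ carrier`. -/
structure BanachCone (E : Type*) [NormedAddCommGroup E] [NormedSpace ℝ E] where
  carrier : Set E
  isClosed : IsClosed carrier
  zero_mem : (0 : E) ∈ carrier
  add_mem : ∀ x ∈ carrier, ∀ y ∈ carrier, x + y ∈ carrier
  smul_mem : ∀ c : ℝ, 0 ≤ c → ∀ x ∈ carrier, c • x ∈ carrier
  pointed : ∀ x ∈ carrier, -x ∈ carrier → x = 0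

/-- The cone is normal: `0 ≤ x ≤ y` implies `‖x‖ ≤ c ‖y‖` for some fixed `c > 0`. -/
def BanachCone.Normal (K : BanachCone E) : Prop :=
  ∃ c : ℝ, 0 < c ∧ ∀ x y : E, x ∈ K.carrier → y - x ∈ K.carrier → ‖x‖ ≤ c * ‖y‖

/-- The cone is reproducing: `E = E₊ - E₊`. -/
def BanachCone.Reproducing (K : BanachCone E) : Prop :=
  ∀ z : E, ∃ x ∈ K.carrier, ∃ y ∈ K.carrier, z = x - y

/-- A bounded linear operator is positive if it maps the cone into itself. -/
def IsPositiveOp (K : BanachCone E) (A : E →L[ℝ] E) : Prop :=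
  ∀ x ∈ K.carrier, A x ∈ K.carrier

/-- `R` is the (bounded) resolvent of the (possibly unbounded) linear operator `B` at `lam`,
i.e. `R = (lam - B)⁻¹`. -/
structure IsResolventAt (B : E →ₗ.[ℝ] E) (lam : ℝ) (R : E →L[ℝ] E) : Prop where
  mem : ∀ y : E, R y ∈ B.domain
  right_inv : ∀ y : E, lam • (R y) - B ⟨R y, mem y⟩ = y
  left_inv : ∀ x : B.domain, R (lam • (x : E) - B x) = (x : E)

/-- A closed operator is resolvent positive if its resolvent set contains a ray `(w, ∞)` on which
the resolvent is a positive operator. -/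
def IsResolventPositive (K : BanachCone E) (B : E →ₗ.[ℝ] E) : Prop :=
  IsClosed (B.graph : Set (E × E)) ∧
  ∃ w : ℝ, ∀ lam : ℝ, w < lam →
    ∃ R : E →L[ℝ] E, IsResolventAt B lam R ∧ IsPositiveOp K R

/-- The spectral bound `s(B) = sup {lam : lam ∈ σ(B)}` of an operator, as an extended real
(`⊥` if the spectrum is empty). -/
noncomputable def spectralBound (B : E →ₗ.[ℝ] E) : EReal :=
  sSup {z : EReal | ∃ lam : ℝ, z = (lam : EReal) ∧
    ¬ ∃ R : E →L[ℝ] E, IsResolventAt B lam R}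

/-- The perturbation `B + C` of an (unbounded) operator `B` by a bounded operator `C`. -/
def addBounded (B : E →ₗ.[ℝ] E) (C : E →L[ℝ] E) : E →ₗ.[ℝ] E :=
  { domain := B.domain
    toFun := B.toFun + (C.toLinearMap.comp B.domain.subtype) }

/-- Spectral radius of a bounded operator, via the Gelfand formula `inf_n ‖A^n‖^{1/n}`. -/
noncomputable def opSpecRad (A : E →L[ℝ] E) : ℝ :=
  ⨅ k : ℕ, ‖A ^ (k + 1)‖ ^ ((1 : ℝ) / ((k : ℝ) + 1))

/-! If `s(B + C/μ) < 0`, the operators `R = (-B)⁻¹` and `Q = (-B - C/μ)⁻¹` exist and are positive: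
a resolvent that exists on `[a, ∞)` and is positive far to the right is positive on all of
`[a, ∞)`, since positivity propagates to the left by Neumann series with a step controlled by the
resolvent's norm. With `T = R C / μ` one has `Q = R + T Q`, hence `0 ≤ Tⁿ R ≤ Q` for all `n`.
Normality and reproducibility of the cone together with the uniform boundedness principle then
bound `‖Tⁿ⁺¹‖ = ‖Tⁿ R (C / μ)‖` uniformly, so `r(T) ≤ 1`, i.e. `r(R C) ≤ μ`. As `μ > 0` is
arbitrary, `r(R C) → 0`. -/

def HasPositiveResolventAt (K : BanachCone E) (B : E →ₗ.[ℝ] E) (lam : ℝ) : Prop :=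
  ∃ R : E →L[ℝ] E, IsResolventAt B lam R ∧ IsPositiveOp K R

theorem forall_ge_of_forall_gt_of_step_down {P : ℝ → Prop} {a w : ℝ} (hw : ∀ x, w < x → P x)
    (hstep : ∀ m, a ≤ m → (∀ x, m < x → P x) → ∃ δ > 0, ∀ x, m - δ < x → P x) :
    ∀ x, a ≤ x → P x := by
  set U := {m | a ≤ m ∧ ∀ x, m < x → P x}
  have hU : max a w ∈ U := ⟨le_max_left _ _, fun x hx => hw x ((le_max_right _ _).trans_lt hx)⟩
  have ham : a ≤ sInf U := le_csInf ⟨_, hU⟩ fun _ hm => hm.1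
  have hm : ∀ x, sInf U < x → P x := fun x hx => by
    obtain ⟨u, hu, hux⟩ := exists_lt_of_csInf_lt ⟨_, hU⟩ hx
    exact hu.2 x hux
  obtain ⟨δ, hδ, hPδ⟩ := hstep _ ham hm
  have hmin : sInf U ≤ max a (sInf U - δ / 2) :=
    csInf_le ⟨a, fun _ hm => hm.1⟩
      ⟨le_max_left _ _, fun x hx => hPδ x (by linarith [le_max_right a (sInf U - δ / 2)])⟩
  have hma : sInf U ≤ a := by
    rcases le_max_iff.1 hmin with h | h
    · exact h
    · linarith
  exact fun x hx => hPδ x (by linarith)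

theorem eq_geom_sum_mul_add_pow_mul {R : Type*} [Semiring R] {q r t : R} (h : q = r + t * q)
    (n : ℕ) : q = (∑ k ∈ Finset.range n, t ^ k) * r + t ^ n * q := by
  induction n with
  | zero => simp
  | succ n ih =>
    rw [Finset.sum_range_succ, add_mul, pow_succ, mul_assoc, add_assoc, ← mul_add, ← h]
    exact ih

theorem pow_succ_rpow_one_div {x : ℝ} (hx : 0 ≤ x) (n : ℕ) :
    (x ^ (n + 1)) ^ ((1 : ℝ) / ((n : ℝ) + 1)) = x := by
  rw [one_div, ← Nat.cast_add_one]
  exact Real.pow_rpow_inv_natCast hx n.succ_ne_zero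

theorem norm_tsum_pow_le {x : E →L[ℝ] E} (h : ‖x‖ < 1) : ‖∑' n : ℕ, x ^ n‖ ≤ (1 - ‖x‖)⁻¹ := by
  have hone : ‖(1 : E →L[ℝ] E)‖ ≤ 1 := ContinuousLinearMap.norm_id_le
  linarith [tsum_geometric_le_of_norm_lt_one x h]

theorem exists_isResolventAt_of_spectralBound_lt {B : E →ₗ.[ℝ] E} {lam : ℝ}
    (h : spectralBound B < lam) : ∃ R : E →L[ℝ] E, IsResolventAt B lam R := by
  by_contra hc
  exact (le_sSup ⟨lam, rfl, hc⟩ : (lam : EReal) ≤ spectralBound B).not_gt h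

@[simp]
theorem addBounded_apply (B : E →ₗ.[ℝ] E) (D : E →L[ℝ] E) (x : (addBounded B D).domain) :
    addBounded B D x = B ⟨x, x.2⟩ + D x :=
  rfl

namespace IsResolventAt

variable {B : E →ₗ.[ℝ] E} {lam μ : ℝ} {R S : E →L[ℝ] E}

theorem unique (hR : IsResolventAt B lam R) (hS : IsResolventAt B lam S) : R = S := by
  ext y
  calc R y = R (lam • S y - B ⟨S y, hS.mem y⟩) := by rw [hS.right_inv]
    _ = S y := hR.left_inv ⟨S y, hS.mem y⟩

theorem addBounded_eq {D Q : E →L[ℝ] E} (hR : IsResolventAt B lam R)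
    (hQ : IsResolventAt (addBounded B D) lam Q) : Q = R + R * D * Q := by
  ext y
  have hQy : lam • Q y - B ⟨Q y, hQ.mem y⟩ = y + D (Q y) := by
    have h := hQ.right_inv y
    rw [addBounded_apply] at h
    linear_combination (norm := module) h
  calc Q y = R (lam • Q y - B ⟨Q y, hQ.mem y⟩) := (hR.left_inv ⟨Q y, hQ.mem y⟩).symm
    _ = (R + R * D * Q) y := by simp [hQy]

theorem neumann [CompleteSpace E] (hS : IsResolventAt B μ S) (h : ‖(μ - lam) • S‖ < 1) :
    IsResolventAt B lam (S * ∑' n : ℕ, ((μ - lam) • S) ^ n) := by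
  set t := (μ - lam) • S
  set v := ∑' n : ℕ, t ^ n
  have hv₁ : (1 - t) * v = 1 := mul_neg_geom_series t h
  have hv₂ : v * (1 - t) = 1 := geom_series_mul_neg t h
  have hSv : Commute S v := Commute.tsum_right S fun n => ((Commute.refl S).smul_right _).pow_right n
  refine ⟨fun y => hS.mem _, fun y => ?_, fun x => ?_⟩
  · have hμ := hS.right_inv (v y)
    calc lam • S (v y) - B ⟨S (v y), hS.mem (v y)⟩ = ((1 - t) * v) y := by
          simp only [mul_apply_eq_comp, sub_apply, one_apply_eq_self,
            smul_apply, t]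
          linear_combination (norm := module) hμ
      _ = y := by rw [hv₁]; rfl
  · have hSx : S (lam • (x : E) - B x) = (1 - t) x := by
      have hμ := hS.left_inv x
      calc S (lam • (x : E) - B x) = S (μ • (x : E) - B x) - (μ - lam) • S x := by
            rw [← map_smul, ← map_sub]
            congr 1
            module
        _ = (1 - t) x := by rw [hμ]; rfl
    rw [hSv.eq, mul_apply_eq_comp, hSx, ← mul_apply_eq_comp, hv₂]
    rfl

end IsResolventAt

namespace IsPositiveOp

variable {K : BanachCone E} {A A' : E →L[ℝ] E}

theorem zero : IsPositiveOp K 0 := fun _ _ => K.zero_mem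

theorem add (hA : IsPositiveOp K A) (hA' : IsPositiveOp K A') : IsPositiveOp K (A + A') :=
  fun x hx => K.add_mem _ (hA x hx) _ (hA' x hx)

theorem smul (hA : IsPositiveOp K A) {c : ℝ} (hc : 0 ≤ c) : IsPositiveOp K (c • A) :=
  fun x hx => K.smul_mem c hc _ (hA x hx)

theorem mul (hA : IsPositiveOp K A) (hA' : IsPositiveOp K A') : IsPositiveOp K (A * A') :=
  fun x hx => hA _ (hA' x hx)

theorem pow (hA : IsPositiveOp K A) (n : ℕ) : IsPositiveOp K (A ^ n) := by
  induction n with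
  | zero => exact fun x hx => hx
  | succ n ih => rw [pow_succ]; exact ih.mul hA

theorem sum {ι : Type*} {s : Finset ι} {f : ι → E →L[ℝ] E} (hf : ∀ i ∈ s, IsPositiveOp K (f i)) :
    IsPositiveOp K (∑ i ∈ s, f i) :=
  Finset.sum_induction f (IsPositiveOp K) (fun _ _ => add) zero hf

theorem tsum {f : ℕ → E →L[ℝ] E} (hf : ∀ n, IsPositiveOp K (f n)) (hs : Summable f) :
    IsPositiveOp K (∑' n, f n) := fun x hx =>
  K.isClosed.mem_of_tendsto (hs.hasSum.mapL (ContinuousLinearMap.apply ℝ E x)).tendsto_sum_nat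
    (Eventually.of_forall fun N => by
      simpa using sum (s := Finset.range N) (fun n _ => hf n) x hx)

theorem mul_tsum_pow_smul [CompleteSpace E] (hA : IsPositiveOp K A) {c : ℝ} (hc : 0 ≤ c)
    (h : ‖c • A‖ < 1) : IsPositiveOp K (A * ∑' n : ℕ, (c • A) ^ n) :=
  hA.mul (tsum (fun n => (hA.smul hc).pow n) (summable_geometric_of_norm_lt_one h))

end IsPositiveOp

theorem IsResolventAt.exists_forall_gt_hasPositiveResolventAt [CompleteSpace E]
    {K : BanachCone E} {B : E →ₗ.[ℝ] E} {m : ℝ} {S : E →L[ℝ] E} (hS : IsResolventAt B m S)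
    (hpos : ∀ lam, m < lam → HasPositiveResolventAt K B lam) :
    ∃ δ > 0, ∀ lam, m - δ < lam → HasPositiveResolventAt K B lam := by
  set b := ‖S‖
  have hb : 0 ≤ b := norm_nonneg S
  set δ := 1 / (4 * (b + 1))
  have hδ : 0 < δ := by positivity
  have hδb : 4 * δ * b < 1 := by
    rw [show 4 * δ * b = b / (b + 1) by simp only [δ]; field_simp]
    exact (div_lt_one (by positivity)).2 (by linarith)
  refine ⟨δ, hδ, fun lam hlam => ?_⟩
  rcases lt_or_ge m lam with hm | hm
  · exact hpos lam hm
  -- the positive resolvent at `m + δ` is controlled by `S` and reaches down past `m - δ`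
  obtain ⟨R, hR, hRpos⟩ := hpos (m + δ) (by linarith)
  have hmδ : ‖(m - (m + δ)) • S‖ ≤ 1 / 2 := by
    rw [norm_smul, Real.norm_eq_abs, show m - (m + δ) = -δ by ring, abs_neg, abs_of_pos hδ]
    linarith
  have hRnorm : ‖R‖ ≤ 2 * b := by
    rw [hR.unique (hS.neumann (by linarith))]
    calc _ ≤ b * ‖∑' n : ℕ, ((m - (m + δ)) • S) ^ n‖ := norm_mul_le _ _
      _ ≤ b * 2 := by
          gcongr
          exact (norm_tsum_pow_le (by linarith)).trans (by
            rw [inv_le_comm₀ (by linarith) two_pos]; linarith)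
      _ = 2 * b := mul_comm _ _
  have hsmall : ‖(m + δ - lam) • R‖ < 1 := by
    rw [norm_smul, Real.norm_eq_abs, abs_of_pos (by linarith)]
    calc (m + δ - lam) * ‖R‖ ≤ (2 * δ) * (2 * b) := by gcongr; linarith
      _ < 1 := by linarith
  exact ⟨_, hR.neumann hsmall, hRpos.mul_tsum_pow_smul (by linarith) hsmall⟩

theorem IsResolventPositive.hasPositiveResolventAt [CompleteSpace E] {K : BanachCone E}
    {B : E →ₗ.[ℝ] E} (hB : IsResolventPositive K B) {lam : ℝ} (hs : spectralBound B < lam) :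
    HasPositiveResolventAt K B lam := by
  obtain ⟨-, w, hw⟩ := hB
  refine forall_ge_of_forall_gt_of_step_down (P := HasPositiveResolventAt K B) hw
    (fun m hm hpos => ?_) lam le_rfl
  obtain ⟨S, hS⟩ := exists_isResolventAt_of_spectralBound_lt (hs.trans_le (by exact_mod_cast hm))
  exact hS.exists_forall_gt_hasPositiveResolventAt hpos

theorem BanachCone.Normal.exists_norm_le_of_dominated [CompleteSpace E] {K : BanachCone E}
    (hKn : K.Normal) (hKr : K.Reproducing) {ι : Type*} {A : ι → E →L[ℝ] E} {P : E →L[ℝ] E}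
    (hA : ∀ i, IsPositiveOp K (A i)) (hAP : ∀ i, IsPositiveOp K (P - A i)) :
    ∃ M, ∀ i, ‖A i‖ ≤ M := by
  obtain ⟨c, -, hc⟩ := hKn
  refine banach_steinhaus fun z => ?_
  obtain ⟨x, hx, y, hy, rfl⟩ := hKr z
  have hbound : ∀ i, ∀ u ∈ K.carrier, ‖A i u‖ ≤ c * ‖P u‖ := fun i u hu =>
    hc _ _ (hA i u hu) (by simpa using hAP i u hu)
  refine ⟨c * ‖P x‖ + c * ‖P y‖, fun i => ?_⟩
  calc ‖A i (x - y)‖ = ‖A i x - A i y‖ := by rw [map_sub]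
    _ ≤ ‖A i x‖ + ‖A i y‖ := norm_sub_le _ _
    _ ≤ c * ‖P x‖ + c * ‖P y‖ := add_le_add (hbound i x hx) (hbound i y hy)

theorem opSpecRad_nonneg (A : E →L[ℝ] E) : 0 ≤ opSpecRad A :=
  Real.iInf_nonneg fun _ => by positivity

theorem opSpecRad_le (A : E →L[ℝ] E) (n : ℕ) :
    opSpecRad A ≤ ‖A ^ (n + 1)‖ ^ ((1 : ℝ) / ((n : ℝ) + 1)) :=
  ciInf_le ⟨0, by rintro _ ⟨k, rfl⟩; positivity⟩ n

theorem opSpecRad_smul (c : ℝ) (A : E →L[ℝ] E) : opSpecRad (c • A) = |c| * opSpecRad A := by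
  rw [opSpecRad, opSpecRad, Real.mul_iInf_of_nonneg (abs_nonneg c)]
  refine iInf_congr fun k => ?_
  rw [smul_pow, norm_smul, Real.norm_eq_abs, abs_pow,
    Real.mul_rpow (by positivity) (norm_nonneg _), pow_succ_rpow_one_div (abs_nonneg c)]

theorem opSpecRad_le_one_of_norm_pow_le {A : E →L[ℝ] E} {M : ℝ} (h : ∀ n : ℕ, ‖A ^ (n + 1)‖ ≤ M) :
    opSpecRad A ≤ 1 := by
  refine le_of_forall_gt_imp_ge_of_dense fun q hq => ?_
  obtain ⟨n, hn⟩ := pow_unbounded_of_one_lt M hq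
  calc opSpecRad A ≤ ‖A ^ (n + 1)‖ ^ ((1 : ℝ) / ((n : ℝ) + 1)) := opSpecRad_le A n
    _ ≤ (q ^ (n + 1)) ^ ((1 : ℝ) / ((n : ℝ) + 1)) := by
        gcongr
        exact (h n).trans (hn.le.trans (pow_le_pow_right₀ hq.le n.le_succ))
    _ = q := pow_succ_rpow_one_div (by linarith) n

theorem opSpecRad_comp_le_of_isPositiveOp [CompleteSpace E] {K : BanachCone E}
    (hKn : K.Normal) (hKr : K.Reproducing) {B : E →ₗ.[ℝ] E} {R C Q : E →L[ℝ] E} {lam μ : ℝ}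
    (hμ : 0 < μ) (hR : IsResolventAt B lam R) (hRpos : IsPositiveOp K R)
    (hCpos : IsPositiveOp K C) (hQ : IsResolventAt (addBounded B ((1 / μ) • C)) lam Q)
    (hQpos : IsPositiveOp K Q) : opSpecRad (R.comp C) ≤ μ := by
  set T := R * ((1 / μ) • C)
  have hTpos : IsPositiveOp K T := hRpos.mul (hCpos.smul (by positivity))
  have hQT : Q = R + T * Q := hR.addBounded_eq hQ
  have hdom : ∀ n, IsPositiveOp K (Q - T ^ n * R) := fun n => by
    have hQn := eq_geom_sum_mul_add_pow_mul hQT (n + 1)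
    rw [Finset.sum_range_succ, add_mul] at hQn
    have hdiff : Q - T ^ n * R = (∑ k ∈ Finset.range n, T ^ k) * R + T ^ (n + 1) * Q := by
      rw [sub_eq_iff_eq_add]
      exact hQn.trans (by abel)
    rw [hdiff]
    exact ((IsPositiveOp.sum fun k _ => hTpos.pow k).mul hRpos).add ((hTpos.pow _).mul hQpos)
  obtain ⟨M, hM⟩ := hKn.exists_norm_le_of_dominated hKr (fun n => (hTpos.pow n).mul hRpos) hdom
  have hTpow : ∀ n : ℕ, ‖T ^ (n + 1)‖ ≤ M * ‖(1 / μ) • C‖ := fun n => by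
    rw [pow_succ, ← mul_assoc]
    exact (norm_mul_le _ _).trans (by gcongr; exact hM n)
  have hRC : R.comp C = μ • T := by
    change R * C = μ • (R * ((1 / μ) • C))
    rw [mul_smul_comm, smul_smul, mul_one_div_cancel hμ.ne', one_smul]
  rw [hRC, opSpecRad_smul, abs_of_pos hμ]
  simpa using mul_le_mul_of_nonneg_left (opSpecRad_le_one_of_norm_pow_le hTpow) hμ.le

/-- Theorem 2.6. Let `(Θ, d)` be a metric space, `θ₀ ∈ Θ`, and `(E, E₊)` an
ordered Banach space with normal, reproducing cone.  For each `θ ≠ θ₀`, let `B θ` be resolvent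
positive with `s(B θ) < 0` and `C θ` positive bounded; assume `B θ + (1/μ) C θ` is resolvent
positive for all `μ > 0` and `θ ≠ θ₀`, and that `limsup_{θ → θ₀} s(B θ + (1/μ) C θ) < 0` for
every `μ > 0`.  Then `r(-(B θ)⁻¹ C θ) → 0` as `θ → θ₀`.
(Here `R θ = (0 - B θ)⁻¹ = -(B θ)⁻¹`.) -/
theorem spectralRadius_tendsto_zero_in_parameter
    [CompleteSpace E]
    {Θ : Type*} [MetricSpace Θ] (θ₀ : Θ)
    (K : BanachCone E) (hKn : K.Normal) (hKr : K.Reproducing)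
    (B : Θ → (E →ₗ.[ℝ] E)) (hB : ∀ θ, θ ≠ θ₀ → IsResolventPositive K (B θ))
    (hsB : ∀ θ, θ ≠ θ₀ → spectralBound (B θ) < 0)
    (C : Θ → (E →L[ℝ] E)) (hC : ∀ θ, θ ≠ θ₀ → IsPositiveOp K (C θ))
    (hBC : ∀ θ, θ ≠ θ₀ → ∀ μ : ℝ, 0 < μ →
      IsResolventPositive K (addBounded (B θ) ((1 / μ) • C θ)))
    (R : Θ → (E →L[ℝ] E)) (hR : ∀ θ, θ ≠ θ₀ → IsResolventAt (B θ) 0 (R θ))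
    (hlim : ∀ μ : ℝ, 0 < μ →
      limsup (fun θ => spectralBound (addBounded (B θ) ((1 / μ) • C θ))) (𝓝[≠] θ₀) < 0) :
    Tendsto (fun θ => opSpecRad ((R θ).comp (C θ))) (𝓝[≠] θ₀) (𝓝 0) := by
  have hsmall : ∀ μ : ℝ, 0 < μ → ∀ᶠ θ in 𝓝[≠] θ₀, opSpecRad ((R θ).comp (C θ)) ≤ μ := by
    intro μ hμ
    filter_upwards [eventually_lt_of_limsup_lt (hlim μ hμ), eventually_mem_nhdsWithin]
      with θ hs hθ
    obtain ⟨R', hR', hR'pos⟩ := (hB θ hθ).hasPositiveResolventAt (hsB θ hθ)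
    obtain ⟨Q, hQ, hQpos⟩ := (hBC θ hθ μ hμ).hasPositiveResolventAt hs
    exact opSpecRad_comp_le_of_isPositiveOp hKn hKr hμ (hR θ hθ)
      ((hR θ hθ).unique hR' ▸ hR'pos) (hC θ hθ) hQ hQpos
  refine tendsto_order.2 ⟨fun a ha => Eventually.of_forall fun θ => ha.trans_le
    (opSpecRad_nonneg _), fun a ha => ?_⟩
  filter_upwards [hsmall (a / 2) (by positivity)] with θ hθ
  linarith
end
end

section
/- Let M̃ : ℝ → ℝ^{n×n} be continuous, T-periodic, with all entries nonnegative for every t, and let {Õ(t,s)} be the evolution family of v' = M̃(t)v; write A = Õ(T,0) = (a_{ij}). If a_{i₀j₀} = 0 for some indices 1 ≤ i₀ ≠ j₀ ≤ n, then the (i₀, j₀) entry of M̃(t) is zero for all t ∈ ℝ. Moreover, if in addition M̃_{ij}(t) = |Ω|⁻¹ ∫_Ω m_{ij}(x,t) dx for a continuous matrix-valued function m = (m_{ij}) on Ω̄ × ℝ with all entries nonnegative (Ω a bounded domain, |Ω| its volume), then m_{i₀j₀}(x,t) = 0 for all (x,t) ∈ Ω̄ × ℝ. -/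
/-!
The columns of the evolution family solve a cooperative system: since `M̃ ≥ 0`, a Grönwall
estimate for the integrated negative part shows that a solution starting in the nonnegative cone
stays there, so all its components are nondecreasing in forward time. The `j₀`-th column `u`
starts at `e_{j₀}`, hence `u_{j₀} ≥ 1`, while `u_{i₀}` rises from `u_{i₀}(0) = 0` to
`u_{i₀}(T) = 0` and is therefore constant on `[0, T]`. Its derivative `∑ₗ M̃_{i₀l} u_l ≥ M̃_{i₀j₀}`
thus vanishes on `[0, T)`, and periodicity spreads this to all `t`. Finally, a continuous
nonnegative function with zero integral over an open set vanishes on its closure.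
-/

open MeasureTheory

/-- `O` is the evolution family (fundamental matrix solution) of the linear ODE `v' = A(t) v`,
recorded entrywise: `O s s = I` and `∂_t O(t,s) = A(t) O(t,s)`. -/
def IsFlow {ι : Type*} [Fintype ι] [DecidableEq ι]
    (A : ℝ → ι → ι → ℝ) (O : ℝ → ℝ → ι → ι → ℝ) : Prop :=
  (∀ s, O s s = fun i j => if i = j then (1 : ℝ) else 0) ∧
  (∀ s t i j, HasDerivAt (fun τ => O τ s i j) (∑ k, A t i k * O t s k j) t)

open Set

lemma neg_mul_negPart_le_mul {a C : ℝ} (ha : 0 ≤ a) (haC : a ≤ C) (x : ℝ) :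
    -(C * x⁻) ≤ a * x := by
  rcases le_total 0 x with hx | hx
  · rw [negPart_eq_zero.2 hx, mul_zero, neg_zero]
    exact mul_nonneg ha hx
  · rw [negPart_eq_neg.2 hx]
    nlinarith

section Cooperative

variable {ι : Type*} [Fintype ι] {M : ℝ → ι → ι → ℝ} {u : ι → ℝ → ℝ}

lemma exists_entry_le_of_continuous (hM : ∀ i j, Continuous fun t => M t i j) (a b : ℝ) :
    ∃ C, 0 ≤ C ∧ ∀ t ∈ Icc a b, ∀ i j, M t i j ≤ C := by
  have hMc : Continuous M := continuous_pi fun i => continuous_pi fun j => hM i j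
  obtain ⟨C, hC⟩ := (isCompact_Icc (a := a) (b := b)).exists_bound_of_continuousOn hMc.continuousOn
  refine ⟨max C 0, le_max_right _ _, fun t ht i j => ?_⟩
  calc M t i j ≤ ‖M t i j‖ := Real.le_norm_self _
    _ ≤ ‖M t‖ := (norm_le_pi_norm (M t i) j).trans (norm_le_pi_norm (M t) i)
    _ ≤ max C 0 := (hC t ht).trans (le_max_left _ _)

variable (hM : ∀ i j, Continuous fun t => M t i j) (hMnn : ∀ t i j, 0 ≤ M t i j)
  (hu : ∀ k t, HasDerivAt (u k) (∑ l, M t k l * u l t) t)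
include hM hMnn hu

lemma negPart_sum_le_mul_integral {a b C : ℝ} (hC0 : 0 ≤ C) (hC : ∀ t ∈ Icc a b, ∀ i j, M t i j ≤ C)
    (ha : ∀ k, 0 ≤ u k a) {t : ℝ} (ht : t ∈ Icc a b) :
    ∑ k, (u k t)⁻ ≤ (Fintype.card ι * C) * ∫ s in a..t, ∑ k, (u k s)⁻ := by
  have hcont : ∀ k, Continuous (u k) := fun k =>
    continuous_iff_continuousAt.2 fun t => (hu k t).continuousAt
  have hN : Continuous fun s => ∑ k, (u k s)⁻ :=
    continuous_finsetSum _ fun k _ => (hcont k).neg.max continuous_const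
  have hbound : ∀ k, (u k t)⁻ ≤ C * ∫ s in a..t, ∑ k, (u k s)⁻ := by
    intro k
    have hftc : u k t - u k a = ∫ s in a..t, ∑ l, M s k l * u l s :=
      (intervalIntegral.integral_eq_sub_of_hasDerivAt (fun s _ => hu k s)
        ((continuous_finsetSum _ fun l _ => (hM k l).mul (hcont l)).intervalIntegrable a t)).symm
    have hlow : ∫ s in a..t, -C * ∑ l, (u l s)⁻ ≤ ∫ s in a..t, ∑ l, M s k l * u l s := by
      refine intervalIntegral.integral_mono_on ht.1
        ((continuous_const.mul hN).intervalIntegrable a t)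
        ((continuous_finsetSum _ fun l _ => (hM k l).mul (hcont l)).intervalIntegrable a t) ?_
      intro s hs
      rw [neg_mul, Finset.mul_sum, ← Finset.sum_neg_distrib]
      exact Finset.sum_le_sum fun l _ =>
        neg_mul_negPart_le_mul (hMnn s k l) (hC s ⟨hs.1, hs.2.trans ht.2⟩ k l) _
    rw [intervalIntegral.integral_const_mul] at hlow
    have hint : 0 ≤ ∫ s in a..t, ∑ k, (u k s)⁻ :=
      intervalIntegral.integral_nonneg ht.1 fun s _ => Finset.sum_nonneg fun k _ => negPart_nonneg _
    exact max_le (by linarith [ha k]) (mul_nonneg hC0 hint)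
  calc ∑ k, (u k t)⁻ ≤ ∑ _k : ι, C * ∫ s in a..t, ∑ k, (u k s)⁻ :=
        Finset.sum_le_sum fun k _ => hbound k
    _ = _ := by rw [Finset.sum_const, Finset.card_univ, nsmul_eq_mul, mul_assoc]

theorem nonneg_of_hasDerivAt_of_nonneg {a t : ℝ} (hat : a ≤ t) (ha : ∀ k, 0 ≤ u k a) (k : ι) :
    0 ≤ u k t := by
  obtain ⟨C, hC0, hC⟩ := exists_entry_le_of_continuous hM a t
  set N : ℝ → ℝ := fun s => ∑ k, (u k s)⁻
  have hN : Continuous N := continuous_finsetSum _ fun k _ =>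
    (continuous_iff_continuousAt.2 fun s => (hu k s).continuousAt).neg.max continuous_const
  have hg : ∀ s, HasDerivAt (fun r => ∫ s in a..r, N s) (N s) s := fun s =>
    (hN.integral_hasStrictDerivAt a s).hasDerivAt
  have hN0 : ∀ s, 0 ≤ N s := fun s => Finset.sum_nonneg fun k _ => negPart_nonneg _
  -- Grönwall for `g = ∫ N`, which satisfies `g' = N ≤ K g` and `g a = 0`
  have hgrowth : ∀ s ∈ Ico a t,
      ‖N s‖ ≤ (Fintype.card ι * C) * ‖∫ r in a..s, N r‖ + 0 := fun s hs => by
    rw [Real.norm_of_nonneg (hN0 s), Real.norm_of_nonneg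
      (intervalIntegral.integral_nonneg hs.1 fun r _ => hN0 r), add_zero]
    exact negPart_sum_le_mul_integral hM hMnn hu hC0 hC ha (Ico_subset_Icc_self hs)
  have hgt := norm_le_gronwallBound_of_norm_deriv_right_le (δ := 0)
    (fun s _ => (hg s).continuousAt.continuousWithinAt) (fun s _ => (hg s).hasDerivWithinAt)
    (by simp) hgrowth t ⟨hat, le_rfl⟩
  rw [gronwallBound_ε0_δ0] at hgt
  have hNt := negPart_sum_le_mul_integral hM hMnn hu hC0 hC ha ⟨hat, le_rfl⟩
  rw [norm_le_zero_iff.1 hgt, mul_zero] at hNt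
  exact negPart_nonpos.1 <| (Finset.single_le_sum (fun k _ => negPart_nonneg (u k t))
    (Finset.mem_univ k)).trans hNt

theorem monotoneOn_Ici_of_hasDerivAt_of_nonneg {a : ℝ} (ha : ∀ k, 0 ≤ u k a) (k : ι) :
    MonotoneOn (u k) (Ici a) :=
  monotoneOn_of_hasDerivWithinAt_nonneg (convex_Ici a)
    (fun s _ => (hu k s).continuousAt.continuousWithinAt) (fun s _ => (hu k s).hasDerivWithinAt)
    fun s hs => Finset.sum_nonneg fun l _ => mul_nonneg (hMnn s k l)
      (nonneg_of_hasDerivAt_of_nonneg hM hMnn hu (interior_Ici.subset hs).le ha l)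

end Cooperative

theorem coeff_eq_zero_of_flow_entry_eq_zero {ι : Type*} [Fintype ι] [DecidableEq ι]
    {M : ℝ → ι → ι → ℝ} {O : ℝ → ℝ → ι → ι → ℝ} {T : ℝ} (hT : 0 < T)
    (hM : ∀ i j, Continuous fun t => M t i j) (hMper : Function.Periodic M T)
    (hMnn : ∀ t i j, 0 ≤ M t i j) (hO : IsFlow M O) {i₀ j₀ : ι} (hne : i₀ ≠ j₀)
    (hzero : O T 0 i₀ j₀ = 0) (t : ℝ) : M t i₀ j₀ = 0 := by
  set u : ι → ℝ → ℝ := fun k s => O s 0 k j₀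
  have hu : ∀ k s, HasDerivAt (u k) (∑ l, M s k l * u l s) s := fun k s => hO.2 0 s k j₀
  have hu0 : ∀ k, u k 0 = if k = j₀ then 1 else 0 := fun k => congrFun (congrFun (hO.1 0) k) j₀
  have hu0nn : ∀ k, 0 ≤ u k 0 := fun k => by rw [hu0]; split_ifs <;> norm_num
  have hmono := monotoneOn_Ici_of_hasDerivAt_of_nonneg hM hMnn hu hu0nn
  have hj₀ : ∀ s, 0 ≤ s → 1 ≤ u j₀ s := fun s hs => by
    simpa [hu0] using hmono j₀ self_mem_Ici hs hs
  have hi₀ : ∀ s ∈ Icc 0 T, u i₀ s = 0 := fun s hs => le_antisymm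
    (hzero ▸ hmono i₀ hs.1 hT.le hs.2) (by simpa [hu0, hne] using hmono i₀ self_mem_Ici hs.1 hs.1)
  obtain ⟨s, hs, hts : M t i₀ j₀ = M s i₀ j₀⟩ :=
    (hMper.comp fun A => A i₀ j₀).exists_mem_Ico₀ hT t
  rw [hts]
  -- `u i₀` is constant on `[s, T]`, so its right derivative at `s` vanishes
  have hderiv : ∑ l, M s i₀ l * u l s = 0 := by
    refine (uniqueDiffOn_Ici s s self_mem_Ici).eq_deriv _ (hu i₀ s).hasDerivWithinAt
      ((hasDerivWithinAt_const s _ 0).congr_of_eventuallyEq ?_ (hi₀ s (Ico_subset_Icc_self hs)))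
    filter_upwards [Icc_mem_nhdsGE hs.2] with r hr using hi₀ r ⟨hs.1.trans hr.1, hr.2⟩
  have hterm : M s i₀ j₀ * u j₀ s ≤ 0 := hderiv ▸ Finset.single_le_sum (fun l _ =>
    mul_nonneg (hMnn s i₀ l) (nonneg_of_hasDerivAt_of_nonneg hM hMnn hu hs.1 hu0nn l))
    (Finset.mem_univ j₀)
  nlinarith [hMnn s i₀ j₀, hj₀ s hs.1]

theorem eqOn_closure_zero_of_setIntegral_eq_zero {X : Type*} [TopologicalSpace X]
    [MeasurableSpace X] [OpensMeasurableSpace X] {μ : Measure X} [μ.IsOpenPosMeasure]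
    {Ω : Set X} {f : X → ℝ} (hΩ : IsOpen Ω) (hf : ContinuousOn f (closure Ω))
    (hfi : IntegrableOn f Ω μ) (hnn : ∀ x ∈ Ω, 0 ≤ f x) (h0 : ∫ x in Ω, f x ∂μ = 0) :
    EqOn f 0 (closure Ω) :=
  have hae := (setIntegral_eq_zero_iff_of_nonneg_ae
    (ae_restrict_of_forall_mem hΩ.measurableSet hnn) hfi).1 h0
  (Measure.eqOn_open_of_ae_eq hae hΩ (hf.mono subset_closure) continuousOn_const).of_subset_closure
    hf continuousOn_const subset_closure subset_rfl

theorem eqOn_closure_zero_of_setAverage_eq_zero {X : Type*} [PseudoMetricSpace X] [ProperSpace X]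
    [MeasurableSpace X] [OpensMeasurableSpace X] {μ : Measure X} [μ.IsOpenPosMeasure]
    [IsFiniteMeasureOnCompacts μ] {Ω : Set X} {f : X → ℝ} (hΩ : IsOpen Ω) (hne : Ω.Nonempty)
    (hb : Bornology.IsBounded Ω) (hf : ContinuousOn f (closure Ω))
    (hnn : ∀ x ∈ Ω, 0 ≤ f x) (h0 : (μ Ω).toReal⁻¹ * ∫ x in Ω, f x ∂μ = 0) :
    EqOn f 0 (closure Ω) := by
  have hμ : (μ Ω).toReal ≠ 0 :=
    (ENNReal.toReal_pos (hΩ.measure_pos μ hne).ne' hb.measure_lt_top.ne).ne'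
  exact eqOn_closure_zero_of_setIntegral_eq_zero hΩ hf
    ((hf.integrableOn_compact' hb.isCompact_closure isClosed_closure.measurableSet).mono_set
      subset_closure) hnn
    ((mul_eq_zero.1 h0).resolve_left (inv_ne_zero hμ))

/-- Let `M̃ : ℝ → ℝ^{n×n}` be continuous, `T`-periodic and entrywise
nonnegative, with evolution family `Õ` and period map `A = Õ(T,0)`.  If `A_{i₀j₀} = 0` for some
`i₀ ≠ j₀`, then `M̃_{i₀j₀}(t) = 0` for all `t`.  Moreover, if in addition `M̃_{ij}(t)` is the
spatial average `|Ω|⁻¹ ∫_Ω m_{ij}(x,t) dx` of a continuous nonnegative matrix function `m` on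
`Ω̄ × ℝ` (with `Ω` a bounded domain), then `m_{i₀j₀}(x,t) = 0` on `Ω̄ × ℝ`. -/
theorem zero_period_entry_implies_zero_coefficient
    {n : ℕ} (T : ℝ) (hT : 0 < T)
    (Mt : ℝ → Fin n → Fin n → ℝ)
    (hMc : ∀ i j, Continuous fun t => Mt t i j)
    (hMper : ∀ t, Mt (t + T) = Mt t)
    (hMnn : ∀ t i j, 0 ≤ Mt t i j)
    (O : ℝ → ℝ → Fin n → Fin n → ℝ)
    (hO : IsFlow Mt O)
    (i₀ j₀ : Fin n) (hne : i₀ ≠ j₀) (hzero : O T 0 i₀ j₀ = 0) :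
    (∀ t : ℝ, Mt t i₀ j₀ = 0) ∧
    (∀ (NN : ℕ) (Ω : Set (Fin NN → ℝ)), IsOpen Ω → IsConnected Ω →
      Bornology.IsBounded Ω →
      ∀ m : (Fin NN → ℝ) → ℝ → Fin n → Fin n → ℝ,
        (∀ i j, ContinuousOn (fun p : (Fin NN → ℝ) × ℝ => m p.1 p.2 i j)
          (closure Ω ×ˢ (Set.univ : Set ℝ))) →
        (∀ x ∈ closure Ω, ∀ t i j, 0 ≤ m x t i j) →
        (∀ t i j, Mt t i j = (volume Ω).toReal⁻¹ * ∫ x in Ω, m x t i j) →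
        ∀ x ∈ closure Ω, ∀ t : ℝ, m x t i₀ j₀ = 0) := by
  have hcoeff : ∀ t, Mt t i₀ j₀ = 0 :=
    coeff_eq_zero_of_flow_entry_eq_zero hT hMc hMper hMnn hO hne hzero
  refine ⟨hcoeff, fun NN Ω hΩo hΩc hΩb m hmc hmnn hrep x hx t => ?_⟩
  have hslice : ContinuousOn (fun y => m y t i₀ j₀) (closure Ω) :=
    (hmc i₀ j₀).comp (Continuous.prodMk_left t).continuousOn fun y hy => ⟨hy, mem_univ t⟩
  exact eqOn_closure_zero_of_setAverage_eq_zero hΩo hΩc.nonempty hΩb hslice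
    (fun y hy => hmnn y (subset_closure hy) t i₀ j₀) ((hrep t i₀ j₀).symm.trans (hcoeff t)) hx
end
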